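/- arXiv:2403.02608 — 4 statements merged into one kernel-verified Lean document; each statement's English description precedes it below -/
import Mathlib

section
/- If Γ ∈ S^t and Ω ∈ S^s are symmetric matrices whose Kronecker sum Ω ⊕ Γ is positive definite, then with c = (λ_min(Γ) − λ_min(Ω))/2, both Γ − c·I_t and Ω + c·I_s are positive definite. -/
/-!
Testing `Ω ⊕ Γ` against `u ⊗ v`, where `u` and `v` are eigenvectors of `Ω` and `Γ` for their
smallest eigenvalues, gives `λ_min(Ω) + λ_min(Γ) > 0`. The shift by `c` splits this positive sum
evenly: the spectra of `Γ - c I` and `Ω + c I` are those of `Γ` and `Ω` moved so that both smallest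
eigenvalues become `(λ_min(Ω) + λ_min(Γ)) / 2`.
-/

open Matrix
open scoped Kronecker

/-- The Kronecker sum `Ω ⊕ Γ := Ω ⊗ I_t + I_s ⊗ Γ`. -/
def kronSum {s t : ℕ} (Ω : Matrix (Fin s) (Fin s) ℝ)
    (Γ : Matrix (Fin t) (Fin t) ℝ) : Matrix (Fin s × Fin t) (Fin s × Fin t) ℝ :=
  Ω ⊗ₖ (1 : Matrix (Fin t) (Fin t) ℝ) + (1 : Matrix (Fin s) (Fin s) ℝ) ⊗ₖ Γ

/-- The smallest eigenvalue of a symmetric matrix. -/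
noncomputable def lambdaMin {n : Type*} [Fintype n] [DecidableEq n]
    {A : Matrix n n ℝ} (hA : A.IsHermitian) (hn : Nonempty n) : ℝ :=
  Finset.univ.inf' (Finset.univ_nonempty_iff.mpr hn) hA.eigenvalues

namespace Matrix

open scoped ComplexOrder Pointwise

variable {m n : Type*} [Fintype m] [Fintype n]

theorem kronecker_mulVec_tensor {l p R : Type*} [CommSemiring R] (A : Matrix l m R)
    (B : Matrix p n R) (u : m → R) (v : n → R) :
    (A ⊗ₖ B) *ᵥ (fun p => u p.1 * v p.2) = fun p => (A *ᵥ u) p.1 * (B *ᵥ v) p.2 := by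
  funext q
  simp only [mulVec, dotProduct, Fintype.sum_prod_type, kroneckerMap_apply, Finset.sum_mul_sum]
  exact Finset.sum_congr rfl fun k _ => Finset.sum_congr rfl fun l _ => by ring

theorem PosDef.pos_of_mulVec_eq_smul {A : Matrix n n ℝ} (hA : A.PosDef) {x : n → ℝ}
    (hx : x ≠ 0) {r : ℝ} (h : A *ᵥ x = r • x) : 0 < r := by
  have hxx : 0 < star x ⬝ᵥ x := dotProduct_star_self_pos_iff.mpr hx
  have hq := hA.dotProduct_mulVec_pos hx
  rw [h, dotProduct_smul, smul_eq_mul] at hq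
  exact pos_of_mul_pos_left hq hxx.le

theorem IsHermitian.posDef_sub_smul_one {𝕜 : Type*} [RCLike 𝕜] [DecidableEq n]
    {A : Matrix n n 𝕜} (hA : A.IsHermitian) {c : ℝ} (hc : ∀ i, c < hA.eigenvalues i) :
    (A - c • (1 : Matrix n n 𝕜)).PosDef := by
  have hB : (A - c • (1 : Matrix n n 𝕜)).IsHermitian :=
    hA.sub (isHermitian_one.smul (IsSelfAdjoint.all c))
  refine hB.posDef_iff_eigenvalues_pos.mpr fun i => ?_
  have hi : hB.eigenvalues i ∈ spectrum ℝ A - ({c} : Set ℝ) := by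
    rw [spectrum.sub_singleton_eq, Algebra.algebraMap_eq_smul_one]
    exact hB.eigenvalues_mem_spectrum_real i
  rw [hA.spectrum_real_eq_range_eigenvalues] at hi
  obtain ⟨_, ⟨j, rfl⟩, _, rfl, hj⟩ := hi
  rw [← hj, sub_pos]
  exact hc j

end Matrix

section lambdaMin

variable {n : Type*} [Fintype n] [DecidableEq n] {A : Matrix n n ℝ} (hA : A.IsHermitian)
  (hn : Nonempty n)

theorem lambdaMin_le_eigenvalues (i : n) : lambdaMin hA hn ≤ hA.eigenvalues i :=
  Finset.inf'_le _ (Finset.mem_univ i)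

theorem exists_eigenvalues_eq_lambdaMin : ∃ i, hA.eigenvalues i = lambdaMin hA hn := by
  obtain ⟨i, -, hi⟩ := Finset.exists_mem_eq_inf' (Finset.univ_nonempty_iff.mpr hn) hA.eigenvalues
  exact ⟨i, hi.symm⟩

end lambdaMin

theorem kronSum_mulVec_tensor_of_eigen {s t : ℕ} {Ω : Matrix (Fin s) (Fin s) ℝ}
    {Γ : Matrix (Fin t) (Fin t) ℝ} {u : Fin s → ℝ} {v : Fin t → ℝ} {a b : ℝ}
    (hu : Ω *ᵥ u = a • u) (hv : Γ *ᵥ v = b • v) :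
    kronSum Ω Γ *ᵥ (fun p => u p.1 * v p.2) = (a + b) • fun p => u p.1 * v p.2 := by
  funext p
  simp only [kronSum, add_mulVec, kronecker_mulVec_tensor, hu, hv, one_mulVec, Pi.add_apply,
    Pi.smul_apply, smul_eq_mul]
  ring

theorem lambdaMin_add_lambdaMin_pos_of_posDef_kronSum {s t : ℕ} {Ω : Matrix (Fin s) (Fin s) ℝ}
    {Γ : Matrix (Fin t) (Fin t) ℝ} (hΩ : Ω.IsHermitian) (hΓ : Γ.IsHermitian)
    (hK : (kronSum Ω Γ).PosDef) (hs : Nonempty (Fin s)) (ht : Nonempty (Fin t)) :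
    0 < lambdaMin hΩ hs + lambdaMin hΓ ht := by
  obtain ⟨i, hi⟩ := exists_eigenvalues_eq_lambdaMin hΩ hs
  obtain ⟨j, hj⟩ := exists_eigenvalues_eq_lambdaMin hΓ ht
  set u := (hΩ.eigenvectorBasis i).ofLp
  set v := (hΓ.eigenvectorBasis j).ofLp
  have hu : u ≠ 0 := by simpa [u] using hΩ.eigenvectorBasis.orthonormal.ne_zero i
  have hv : v ≠ 0 := by simpa [v] using hΓ.eigenvectorBasis.orthonormal.ne_zero j
  have huv : (fun p : Fin s × Fin t => u p.1 * v p.2) ≠ 0 := by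
    obtain ⟨k, hk⟩ := Function.ne_iff.mp hu
    obtain ⟨l, hl⟩ := Function.ne_iff.mp hv
    exact Function.ne_iff.mpr ⟨(k, l), mul_ne_zero hk hl⟩
  rw [← hi, ← hj]
  exact hK.pos_of_mulVec_eq_smul huv <| kronSum_mulVec_tensor_of_eigen
    (hΩ.mulVec_eigenvectorBasis i) (hΓ.mulVec_eigenvectorBasis j)

theorem stmt4 {s t : ℕ} (hs : 0 < s) (ht : 0 < t)
    (Γ : Matrix (Fin t) (Fin t) ℝ) (Ω : Matrix (Fin s) (Fin s) ℝ)
    (hΓ : Γ.IsHermitian) (hΩ : Ω.IsHermitian)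
    (hK : (kronSum Ω Γ).PosDef)
    (c : ℝ) (hc : c = (lambdaMin hΓ ⟨⟨0, ht⟩⟩ - lambdaMin hΩ ⟨⟨0, hs⟩⟩) / 2) :
    (Γ - c • (1 : Matrix (Fin t) (Fin t) ℝ)).PosDef ∧
      (Ω + c • (1 : Matrix (Fin s) (Fin s) ℝ)).PosDef := by
  have hsum := lambdaMin_add_lambdaMin_pos_of_posDef_kronSum hΩ hΓ hK ⟨⟨0, hs⟩⟩ ⟨⟨0, ht⟩⟩
  constructor
  · refine hΓ.posDef_sub_smul_one fun j => ?_
    have := lambdaMin_le_eigenvalues hΓ ⟨⟨0, ht⟩⟩ j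
    linarith
  · rw [← sub_neg_eq_add, ← neg_smul]
    refine hΩ.posDef_sub_smul_one fun i => ?_
    have := lambdaMin_le_eigenvalues hΩ ⟨⟨0, hs⟩⟩ i
    linarith
end

section
/- Let β > 0 and Γ ∈ S^t with eigenvalues λ_1,…,λ_t. For Ω ∈ S^s with eigenvalue decomposition Ω = Q·Diag(μ_1,…,μ_s)·Qᵀ (Q orthogonal), the unique minimizer over Υ ∈ S^s of (1/2)‖Υ − Ω‖_F² − β log det(Υ ⊕ Γ), subject to Υ ⊕ Γ positive definite, is Υ* = Q·Diag(α_1,…,α_s)·Qᵀ, where each α_j is the unique solution of α_j − μ_j − ∑_{i=1}^t β/(α_j + λ_i) = 0 with α_j > −min_i λ_i. -/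
open Matrix
open scoped Kronecker

/-- Squared Frobenius norm. -/
def frobSq {n : ℕ} (A : Matrix (Fin n) (Fin n) ℝ) : ℝ :=
  ∑ i, ∑ j, (A i j) ^ 2

/-!
The objective is strictly convex and `Υ*` is its stationary point. Around `Υ*` the Frobenius
term expands exactly, leaving `½‖Υ - Υ*‖²_F`, while `log det` lies below its tangent:
`log det X ≤ log det A + tr (A⁻¹ (X - A))`. With `Γ = P Diag(λ) Pᵀ`, conjugation by `Q ⊗ P`
diagonalises `Υ* ⊕ Γ` with entries `α_j + λ_i`, so at `A = Υ* ⊕ Γ` the tangent term is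
`∑_j (∑_i (α_j + λ_i)⁻¹) (Qᵀ (Υ - Υ*) Q)_jj`, and the equations for the `α_j` make `β` times it
equal to the linear term `⟨Υ* - Ω, Υ - Υ*⟩_F` of the Frobenius expansion. Hence
`F Υ - F Υ* ≥ ½‖Υ - Υ*‖²_F > 0`.
-/

namespace Matrix

theorem trace_mul_diagonal_mul_transpose_mul {m n R : Type*} [Fintype m] [Fintype n]
    [DecidableEq n] [CommSemiring R] (U : Matrix m n R) (f : n → R) (M : Matrix m m R) :
    (U * diagonal f * Uᵀ * M).trace = ∑ i, f i * (Uᵀ * M * U) i i := by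
  rw [Matrix.mul_assoc, Matrix.mul_assoc, trace_mul_comm, Matrix.mul_assoc (diagonal f)]
  simp [trace, diagonal_mul]

variable {n : Type*} [Fintype n] [DecidableEq n]

theorem inv_mul_diagonal_mul_transpose {K : Type*} [Field K] {U : Matrix n n K}
    (hU : U * Uᵀ = 1) {d : n → K} (hd : ∀ i, d i ≠ 0) :
    (U * diagonal d * Uᵀ)⁻¹ = U * diagonal d⁻¹ * Uᵀ := by
  have hdd : diagonal d⁻¹ * diagonal d = 1 := by
    rw [diagonal_mul_diagonal, ← diagonal_one]
    exact congrArg diagonal (funext fun i => inv_mul_cancel₀ (hd i))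
  apply inv_eq_left_inv
  calc U * diagonal d⁻¹ * Uᵀ * (U * diagonal d * Uᵀ)
      = U * (diagonal d⁻¹ * (Uᵀ * U) * diagonal d) * Uᵀ := by simp only [Matrix.mul_assoc]
    _ = 1 := by rw [mul_eq_one_comm.mp hU, mul_one, hdd, mul_one, hU]

theorem posDef_mul_diagonal_mul_transpose {U : Matrix n n ℝ} (hU : U * Uᵀ = 1) {d : n → ℝ}
    (hd : ∀ i, 0 < d i) : (U * diagonal d * Uᵀ).PosDef := by
  have hUunit : IsUnit U := ⟨⟨U, Uᵀ, hU, mul_eq_one_comm.mp hU⟩, rfl⟩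
  simpa [conjTranspose_eq_transpose_of_trivial] using
    (PosDef.diagonal hd).mul_mul_conjTranspose_same (vecMul_injective_iff_isUnit.mpr hUunit)

theorem IsHermitian.exists_eq_mul_diagonal_eigenvalues_mul_transpose {A : Matrix n n ℝ}
    (hA : A.IsHermitian) :
    ∃ P : Matrix n n ℝ, P * Pᵀ = 1 ∧ A = P * diagonal hA.eigenvalues * Pᵀ := by
  refine ⟨hA.eigenvectorUnitary, ?_, ?_⟩
  · simpa [star_eq_conjTranspose, conjTranspose_eq_transpose_of_trivial] using
      (mem_unitaryGroup_iff).mp hA.eigenvectorUnitary.2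
  · simpa [RCLike.ofReal_real_eq_id, star_eq_conjTranspose,
      conjTranspose_eq_transpose_of_trivial, Function.comp_def] using hA.spectral_theorem

theorem PosDef.log_det_le_trace_sub_card {B : Matrix n n ℝ} (hB : B.PosDef) :
    Real.log B.det ≤ B.trace - Fintype.card n := by
  have hν := hB.eigenvalues_pos
  rw [hB.isHermitian.det_eq_prod_eigenvalues, hB.isHermitian.trace_eq_sum_eigenvalues]
  simp only [RCLike.ofReal_real_eq_id, id]
  rw [Real.log_prod fun i _ => (hν i).ne', Fintype.card_eq_sum_ones, Nat.cast_sum,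
    ← Finset.sum_sub_distrib]
  exact Finset.sum_le_sum fun i _ => by
    simpa using Real.log_le_sub_one_of_pos (hν i)

open scoped MatrixOrder in
theorem PosDef.log_det_le_log_det_add_trace_inv_mul_sub {A X : Matrix n n ℝ} (hA : A.PosDef)
    (hX : X.PosDef) : Real.log X.det ≤ Real.log A.det + (A⁻¹ * (X - A)).trace := by
  -- With `A = Mᴴ M` and `B = M⁻ᴴ X M⁻¹` this is `log det B ≤ tr B - n`.
  obtain ⟨M, rfl⟩ := CStarAlgebra.nonneg_iff_eq_star_mul_self.mp hA.posSemidef.nonneg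
  rw [star_eq_conjTranspose] at hA ⊢
  have hM : IsUnit M := by
    rw [isUnit_iff_isUnit_det]
    exact isUnit_of_mul_isUnit_right (det_mul Mᴴ M ▸ (isUnit_iff_isUnit_det _).mp hA.isUnit)
  set N := M⁻¹
  have hNM : N * M = 1 := nonsing_inv_mul M ((isUnit_iff_isUnit_det M).mp hM)
  set B := Nᴴ * X * N
  have hB : B.PosDef :=
    hX.conjTranspose_mul_mul_same <|
      mulVec_injective_iff_isUnit.mpr (isUnit_nonsing_inv_iff.mpr hM)
  have hXB : X = Mᴴ * B * M := by
    simp only [B, ← Matrix.mul_assoc, ← conjTranspose_mul, hNM, conjTranspose_one, one_mul]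
    rw [Matrix.mul_assoc, hNM, mul_one]
  have hlog : Real.log X.det = Real.log B.det + Real.log (Mᴴ * M).det := by
    rw [← Real.log_mul hB.det_pos.ne' hA.det_pos.ne', hXB]
    simp only [det_mul]
    congr 1
    ring
  have htrace : ((Mᴴ * M)⁻¹ * (X - Mᴴ * M)).trace = B.trace - Fintype.card n := by
    rw [Matrix.mul_sub, trace_sub, nonsing_inv_mul _ ((isUnit_iff_isUnit_det _).mp hA.isUnit),
      trace_one, Matrix.mul_inv_rev, ← conjTranspose_nonsing_inv, Matrix.mul_assoc,
      trace_mul_comm]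
  rw [hlog, htrace]
  linarith [hB.log_det_le_trace_sub_card]

end Matrix

theorem frobSq_add {n : ℕ} (A B : Matrix (Fin n) (Fin n) ℝ) :
    frobSq (A + B) = frobSq A + 2 * (Aᵀ * B).trace + frobSq B := by
  simp only [frobSq, trace, diag, mul_apply, transpose_apply, Matrix.add_apply, add_sq,
    Finset.sum_add_distrib, Finset.mul_sum]
  rw [Finset.sum_comm (γ := Fin n) (f := fun i j => 2 * (A j i * B j i))]
  simp only [mul_assoc]

theorem frobSq_pos {n : ℕ} {A : Matrix (Fin n) (Fin n) ℝ} (hA : A ≠ 0) : 0 < frobSq A := by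
  obtain ⟨i, j, hij⟩ : ∃ i j, A i j ≠ 0 := by
    by_contra! h
    exact hA (Matrix.ext h)
  exact Finset.sum_pos' (fun i _ => Finset.sum_nonneg fun j _ => sq_nonneg _)
    ⟨i, Finset.mem_univ _, Finset.sum_pos' (fun j _ => sq_nonneg _)
      ⟨j, Finset.mem_univ _, sq_pos_of_ne_zero hij⟩⟩

section KroneckerSum

variable {s t : ℕ}

theorem kronSum_sub_kronSum (A B : Matrix (Fin s) (Fin s) ℝ) (Γ : Matrix (Fin t) (Fin t) ℝ) :
    kronSum A Γ - kronSum B Γ = (A - B) ⊗ₖ (1 : Matrix (Fin t) (Fin t) ℝ) := by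
  ext
  simp only [kronSum, Matrix.sub_apply, Matrix.add_apply, kroneckerMap_apply]
  ring

variable {Q : Matrix (Fin s) (Fin s) ℝ} {P : Matrix (Fin t) (Fin t) ℝ}

theorem kronecker_mul_transpose_eq_one (hQ : Q * Qᵀ = 1) (hP : P * Pᵀ = 1) :
    (Q ⊗ₖ P) * (Q ⊗ₖ P)ᵀ = 1 := by
  rw [← kroneckerMap_transpose, ← mul_kronecker_mul, hQ, hP, one_kronecker_one]

theorem kronSum_mul_diagonal_mul_transpose (hQ : Q * Qᵀ = 1) (hP : P * Pᵀ = 1)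
    (α : Fin s → ℝ) (ν : Fin t → ℝ) :
    kronSum (Q * diagonal α * Qᵀ) (P * diagonal ν * Pᵀ)
      = (Q ⊗ₖ P) * diagonal (fun p => α p.1 + ν p.2) * (Q ⊗ₖ P)ᵀ := by
  have hdiag : diagonal (fun p : Fin s × Fin t => α p.1 + ν p.2)
      = diagonal α ⊗ₖ (1 : Matrix (Fin t) (Fin t) ℝ)
        + (1 : Matrix (Fin s) (Fin s) ℝ) ⊗ₖ diagonal ν := by
    rw [← diagonal_one, ← diagonal_one, diagonal_kronecker_diagonal, diagonal_kronecker_diagonal,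
      diagonal_add]
    simp
  rw [hdiag, ← kroneckerMap_transpose, Matrix.mul_add, Matrix.add_mul, ← mul_kronecker_mul,
    ← mul_kronecker_mul, ← mul_kronecker_mul, ← mul_kronecker_mul, mul_one, mul_one, hP, hQ,
    kronSum]

theorem trace_inv_kronSum_mul_kronecker_one (hQ : Q * Qᵀ = 1) (hP : P * Pᵀ = 1)
    {α : Fin s → ℝ} {ν : Fin t → ℝ} (hαν : ∀ j i, α j + ν i ≠ 0)
    (D : Matrix (Fin s) (Fin s) ℝ) :
    ((kronSum (Q * diagonal α * Qᵀ) (P * diagonal ν * Pᵀ))⁻¹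
        * (D ⊗ₖ (1 : Matrix (Fin t) (Fin t) ℝ))).trace
      = ∑ j, (∑ i, (α j + ν i)⁻¹) * (Qᵀ * D * Q) j j := by
  rw [kronSum_mul_diagonal_mul_transpose hQ hP,
    inv_mul_diagonal_mul_transpose (kronecker_mul_transpose_eq_one hQ hP) fun p => hαν p.1 p.2,
    trace_mul_diagonal_mul_transpose_mul, ← kroneckerMap_transpose, ← mul_kronecker_mul,
    ← mul_kronecker_mul, mul_one, mul_eq_one_comm.mp hP, Fintype.sum_prod_type]
  simp [Finset.sum_mul]

end KroneckerSum

theorem stmt10_general {s t : ℕ} (ht : 0 < t) (β : ℝ) (hβ : 0 < β)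
    (Γ : Matrix (Fin t) (Fin t) ℝ) (hΓ : Γ.IsHermitian)
    (Ω : Matrix (Fin s) (Fin s) ℝ)
    (Q : Matrix (Fin s) (Fin s) ℝ) (hQ : Q * Qᵀ = 1)
    (μ : Fin s → ℝ) (hdecomp : Ω = Q * Matrix.diagonal μ * Qᵀ)
    (α : Fin s → ℝ)
    (hαgt : ∀ j, α j >
      -(Finset.univ.inf' ⟨⟨0, ht⟩, Finset.mem_univ _⟩ hΓ.eigenvalues))
    (hαeq : ∀ j, α j - μ j - ∑ i : Fin t, β / (α j + hΓ.eigenvalues i) = 0) :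
    let F : Matrix (Fin s) (Fin s) ℝ → ℝ := fun Υ =>
      (1 / 2) * frobSq (Υ - Ω) - β * Real.log (kronSum Υ Γ).det
    let S : Set (Matrix (Fin s) (Fin s) ℝ) :=
      {Υ | Υ.IsHermitian ∧ (kronSum Υ Γ).PosDef}
    let Υstar : Matrix (Fin s) (Fin s) ℝ := Q * Matrix.diagonal α * Qᵀ
    Υstar ∈ S ∧ ∀ Υ ∈ S, Υ ≠ Υstar → F Υstar < F Υ := by
  intro F S Υstar
  obtain ⟨P, hP, hΓP⟩ := hΓ.exists_eq_mul_diagonal_eigenvalues_mul_transpose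
  have hpos : ∀ j i, 0 < α j + hΓ.eigenvalues i := fun j i => by
    linarith [hαgt j, Finset.inf'_le hΓ.eigenvalues (Finset.mem_univ i)]
  have hA : (kronSum Υstar Γ).PosDef := by
    rw [hΓP, kronSum_mul_diagonal_mul_transpose hQ hP]
    exact posDef_mul_diagonal_mul_transpose (kronecker_mul_transpose_eq_one hQ hP)
      fun p => hpos p.1 p.2
  refine ⟨⟨by simpa [conjTranspose_eq_transpose_of_trivial] using
    isHermitian_mul_mul_conjTranspose Q (isHermitian_diagonal α), hA⟩, ?_⟩
  rintro Υ ⟨-, hX⟩ hne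
  have hresidual : (Υstar - Ω)ᵀ
      = Q * diagonal (fun j => β * ∑ i, (α j + hΓ.eigenvalues i)⁻¹) * Qᵀ := by
    rw [hdecomp, ← Matrix.sub_mul, ← Matrix.mul_sub, diagonal_sub, transpose_mul, transpose_mul,
      transpose_transpose, diagonal_transpose, Matrix.mul_assoc]
    congr 3
    funext j
    rw [Finset.mul_sum]
    simp only [← div_eq_mul_inv]
    linarith [hαeq j]
  have hstationary : β * ((kronSum Υstar Γ)⁻¹ * (kronSum Υ Γ - kronSum Υstar Γ)).trace
      = ((Υstar - Ω)ᵀ * (Υ - Υstar)).trace := by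
    rw [kronSum_sub_kronSum, hΓP,
      trace_inv_kronSum_mul_kronecker_one hQ hP fun j i => (hpos j i).ne', hresidual,
      trace_mul_diagonal_mul_transpose_mul, Finset.mul_sum]
    simp only [mul_assoc]
  have hlogdet := hA.log_det_le_log_det_add_trace_inv_mul_sub hX
  have hfrob : frobSq (Υ - Ω)
      = frobSq (Υstar - Ω) + 2 * ((Υstar - Ω)ᵀ * (Υ - Υstar)).trace
        + frobSq (Υ - Υstar) := by
    rw [← frobSq_add, sub_add_sub_cancel']
  have hD := frobSq_pos (sub_ne_zero.mpr hne)
  show (1 / 2) * frobSq (Υstar - Ω) - β * Real.log (kronSum Υstar Γ).det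
    < (1 / 2) * frobSq (Υ - Ω) - β * Real.log (kronSum Υ Γ).det
  linarith [mul_le_mul_of_nonneg_left hlogdet hβ.le]

/-- The proximal operator of `-β log det (· ⊕ Γ)`: the unique minimizer of
`(1/2)‖Υ - Ω‖_F² - β log det (Υ ⊕ Γ)` over `{Υ : Υ ⊕ Γ ≻ 0}` is
`Q Diag(α) Qᵀ`, where `Ω = Q Diag(μ) Qᵀ` and each `α j` solves the stated
univariate equation. -/
theorem stmt10 {s t : ℕ} (ht : 0 < t) (β : ℝ) (hβ : 0 < β)
    (Γ : Matrix (Fin t) (Fin t) ℝ) (hΓ : Γ.IsHermitian)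
    (Ω : Matrix (Fin s) (Fin s) ℝ) (hΩ : Ω.IsHermitian)
    (Q : Matrix (Fin s) (Fin s) ℝ) (hQ : Q * Qᵀ = 1)
    (μ : Fin s → ℝ) (hdecomp : Ω = Q * Matrix.diagonal μ * Qᵀ)
    (α : Fin s → ℝ)
    (hαgt : ∀ j, α j >
      -(Finset.univ.inf' ⟨⟨0, ht⟩, Finset.mem_univ _⟩ hΓ.eigenvalues))
    (hαeq : ∀ j, α j - μ j - ∑ i : Fin t, β / (α j + hΓ.eigenvalues i) = 0) :
    let F : Matrix (Fin s) (Fin s) ℝ → ℝ := fun Υ =>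
      (1 / 2) * frobSq (Υ - Ω) - β * Real.log (kronSum Υ Γ).det
    let S : Set (Matrix (Fin s) (Fin s) ℝ) :=
      {Υ | Υ.IsHermitian ∧ (kronSum Υ Γ).PosDef}
    let Υstar : Matrix (Fin s) (Fin s) ℝ := Q * Matrix.diagonal α * Qᵀ
    Υstar ∈ S ∧ ∀ Υ ∈ S, Υ ≠ Υstar → F Υstar < F Υ :=
  stmt10_general ht β hβ Γ hΓ Ω Q hQ μ hdecomp α hαgt hαeq
end

section
/- Let Γ ∈ S^t with eigenpairs (λ_i, u_i) and Ω ∈ S^s with eigenpairs (μ_j, v_j), and suppose Ω ⊕ Γ is positive definite. Then the gradient of Γ ↦ log det(Ω ⊕ Γ) is ∑_{i=1}^t (∑_{j=1}^s 1/(μ_j + λ_i)) u_i u_iᵀ, and the gradient of Ω ↦ log det(Ω ⊕ Γ) is ∑_{j=1}^s (∑_{i=1}^t 1/(μ_j + λ_i)) v_j v_jᵀ. -/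
/-!
The vectors `v_j ⊗ u_i` form an orthonormal eigenbasis of `Ω ⊕ Γ`, with eigenvalues `μ_j + λ_i`,
which are positive since `Ω ⊕ Γ` is positive definite. Hence
`(Ω ⊕ Γ)⁻¹ = ∑ (μ_j + λ_i)⁻¹ (v_j ⊗ u_i)(v_j ⊗ u_i)ᵀ`, and by Jacobi's formula
`d/dε log det (A + ε B) = tr (A⁻¹ B)` at `ε = 0`. Perturbing `Γ` in direction `H` perturbs
`Ω ⊕ Γ` in direction `I_s ⊗ H`, so the derivative is `∑_{j,i} (μ_j + λ_i)⁻¹ u_iᵀ H u_i`, the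
Frobenius pairing of `H` with the claimed gradient. The `Ω`-gradient follows by symmetry:
swapping the two Kronecker factors is a simultaneous permutation of rows and columns, which
does not change the determinant.
-/

open Matrix
open scoped Kronecker

section OrthonormalFamily

variable {R n : Type*} [Fintype n] [DecidableEq n]

theorem sum_vecMulVec_self_eq_one [CommRing R] {u : n → n → R}
    (hu : ∀ i j, u i ⬝ᵥ u j = if i = j then 1 else 0) :
    ∑ i, vecMulVec (u i) (u i) = 1 := by
  have hU : (of u)ᵀ * of u = 1 :=
    mul_eq_one_comm.mp <| by ext i j; simpa [mul_apply, dotProduct, one_apply] using hu i j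
  ext a b
  simpa [mul_apply, Matrix.sum_apply, vecMulVec_apply] using congr_fun₂ hU a b

theorem sum_smul_vecMulVec_mulVec [CommRing R] {u : n → n → R}
    (hu : ∀ i j, u i ⬝ᵥ u j = if i = j then 1 else 0) (d : n → R) (k : n) :
    (∑ i, d i • vecMulVec (u i) (u i)) *ᵥ u k = d k • u k := by
  simp [sum_mulVec, smul_mulVec, vecMulVec_mulVec, hu]

theorem sum_smul_vecMulVec_mul_sum_smul_vecMulVec [CommRing R] {u : n → n → R}
    (hu : ∀ i j, u i ⬝ᵥ u j = if i = j then 1 else 0) (a b : n → R) :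
    (∑ i, a i • vecMulVec (u i) (u i)) * (∑ j, b j • vecMulVec (u j) (u j)) =
      ∑ i, (a i * b i) • vecMulVec (u i) (u i) := by
  simp [Finset.sum_mul, Finset.mul_sum, vecMulVec_mul_vecMulVec, hu, apply_ite (vecMulVec _),
    smul_ite, smul_smul, mul_comm]

theorem sum_smul_vecMulVec_mul_sum_inv_smul_vecMulVec [Field R] {u : n → n → R}
    (hu : ∀ i j, u i ⬝ᵥ u j = if i = j then 1 else 0) {d : n → R} (hd : ∀ i, d i ≠ 0) :
    (∑ i, d i • vecMulVec (u i) (u i)) * (∑ i, (d i)⁻¹ • vecMulVec (u i) (u i)) = 1 := by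
  simp [sum_smul_vecMulVec_mul_sum_smul_vecMulVec hu, hd, sum_vecMulVec_self_eq_one hu]

theorem pos_of_posDef_sum_smul_vecMulVec {u : n → n → ℝ}
    (hu : ∀ i j, u i ⬝ᵥ u j = if i = j then 1 else 0) {d : n → ℝ}
    (hA : (∑ i, d i • vecMulVec (u i) (u i)).PosDef) (k : n) : 0 < d k := by
  have hk : u k ≠ 0 := fun h => by simpa [h] using hu k k
  simpa [sum_smul_vecMulVec_mulVec hu, hu] using hA.dotProduct_mulVec_pos hk

end OrthonormalFamily

theorem trace_sum_smul_vecMulVec_mul {R ι n : Type*} [Fintype ι] [Fintype n] [CommSemiring R]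
    (u : ι → n → R) (c : ι → R) (C : Matrix n n R) :
    trace ((∑ i, c i • vecMulVec (u i) (u i)) * C) = ∑ i, c i * (u i ⬝ᵥ C *ᵥ u i) := by
  simp only [Finset.sum_mul, trace_sum, smul_mul, trace_smul, vecMulVec_mul, trace_vecMulVec,
    smul_eq_mul]
  exact Finset.sum_congr rfl fun i _ => by rw [dotProduct_mulVec, dotProduct_comm]

section LogDet

variable {n : Type*} [Fintype n] [DecidableEq n]

theorem hasDerivAt_det_one_add_smul {𝕜 : Type*} [NontriviallyNormedField 𝕜]
    (M : Matrix n n 𝕜) : HasDerivAt (fun ε : 𝕜 => (1 + ε • M).det) M.trace 0 := by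
  have h := (det (1 + (Polynomial.X : Polynomial 𝕜) • M.map Polynomial.C)).hasDerivAt 0
  rw [derivative_det_one_add_X_smul] at h
  convert h using 1
  ext ε
  simp [eval_det, ← smul_eq_mul_diagonal]

theorem hasDerivAt_log_det_add_smul {A : Matrix n n ℝ} (hA : A.det ≠ 0) (B : Matrix n n ℝ) :
    HasDerivAt (fun ε : ℝ => Real.log (A + ε • B).det) (trace (A⁻¹ * B)) 0 := by
  have hfactor : ∀ ε : ℝ, A + ε • B = A * (1 + ε • (A⁻¹ * B)) := fun ε => by
    rw [Matrix.mul_add, Matrix.mul_one, Matrix.mul_smul, ← Matrix.mul_assoc,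
      mul_nonsing_inv A (isUnit_iff_ne_zero.mpr hA), Matrix.one_mul]
  simp_rw [hfactor, det_mul]
  convert ((hasDerivAt_det_one_add_smul (A⁻¹ * B)).const_mul A.det).log (by simp [hA]) using 1
  simp [hA]

end LogDet

theorem hasDerivAt_log_det_sum_smul_vecMulVec_add_smul {n : Type*} [Fintype n] [DecidableEq n]
    {u : n → n → ℝ} (hu : ∀ i j, u i ⬝ᵥ u j = if i = j then 1 else 0) {d : n → ℝ}
    (hd : ∀ i, d i ≠ 0) (B : Matrix n n ℝ) :
    HasDerivAt (fun ε : ℝ => Real.log ((∑ i, d i • vecMulVec (u i) (u i)) + ε • B).det)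
      (∑ i, (d i)⁻¹ * (u i ⬝ᵥ B *ᵥ u i)) 0 := by
  have hinv := sum_smul_vecMulVec_mul_sum_inv_smul_vecMulVec hu hd
  simpa [inv_eq_right_inv hinv, trace_sum_smul_vecMulVec_mul] using
    hasDerivAt_log_det_add_smul (det_ne_zero_of_right_inverse hinv) B

section KroneckerVector

variable {R l m : Type*} [CommSemiring R]

def kronVec (a : l → R) (b : m → R) : l × m → R := fun p => a p.1 * b p.2

theorem vecMulVec_kronVec (a c : l → R) (b d : m → R) :
    vecMulVec (kronVec a b) (kronVec c d) = vecMulVec a c ⊗ₖ vecMulVec b d := by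
  ext ⟨i, j⟩ ⟨k, k'⟩
  simp [kronVec, vecMulVec_apply, mul_mul_mul_comm]

theorem sum_kronecker_sum {ι κ : Type*} [Fintype ι] [Fintype κ] (X : ι → Matrix l l R)
    (Y : κ → Matrix m m R) : (∑ i, X i) ⊗ₖ (∑ j, Y j) = ∑ i, ∑ j, X i ⊗ₖ Y j := by
  ext
  simp [Matrix.sum_apply, Finset.sum_mul_sum]

variable [Fintype l] [Fintype m]

theorem kronVec_dotProduct_kronVec (a c : l → R) (b d : m → R) :
    kronVec a b ⬝ᵥ kronVec c d = (a ⬝ᵥ c) * (b ⬝ᵥ d) := by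
  simp [kronVec, dotProduct, Fintype.sum_prod_type, Finset.sum_mul_sum, mul_mul_mul_comm]

theorem kronecker_mulVec_kronVec {l' m' : Type*} (X : Matrix l' l R) (Y : Matrix m' m R)
    (a : l → R) (b : m → R) : (X ⊗ₖ Y) *ᵥ kronVec a b = kronVec (X *ᵥ a) (Y *ᵥ b) := by
  ext ⟨i, j⟩
  simp [kronVec, mulVec, dotProduct, Fintype.sum_prod_type, Finset.sum_mul_sum, mul_mul_mul_comm]

theorem kronVec_dotProduct_kronVec_of_orthonormal [DecidableEq l] [DecidableEq m]
    {v : l → l → R} {u : m → m → R}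
    (hv : ∀ i j, v i ⬝ᵥ v j = if i = j then 1 else 0)
    (hu : ∀ i j, u i ⬝ᵥ u j = if i = j then 1 else 0) (p q : l × m) :
    kronVec (v p.1) (u p.2) ⬝ᵥ kronVec (v q.1) (u q.2) = if p = q then 1 else 0 := by
  simp only [kronVec_dotProduct_kronVec, hv, hu, ite_zero_mul_ite_zero, mul_one, Prod.ext_iff]

end KroneckerVector

section KroneckerSum

variable {s t : ℕ}

theorem kronSum_add_smul_right (Ω : Matrix (Fin s) (Fin s) ℝ) (Γ H : Matrix (Fin t) (Fin t) ℝ)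
    (ε : ℝ) :
    kronSum Ω (Γ + ε • H) = kronSum Ω Γ + ε • ((1 : Matrix (Fin s) (Fin s) ℝ) ⊗ₖ H) := by
  rw [kronSum, kronSum, kronecker_add, kronecker_smul, add_assoc]

theorem det_kronSum_comm (Ω : Matrix (Fin s) (Fin s) ℝ) (Γ : Matrix (Fin t) (Fin t) ℝ) :
    (kronSum Γ Ω).det = (kronSum Ω Γ).det := by
  rw [← det_reindex_self (Equiv.prodComm _ _) (kronSum Ω Γ)]
  congr 1
  ext ⟨i, j⟩ ⟨k, l⟩
  simp [kronSum, one_apply, add_comm]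

variable {Γ : Matrix (Fin t) (Fin t) ℝ} {Ω : Matrix (Fin s) (Fin s) ℝ}
  {lam : Fin t → ℝ} {u : Fin t → Fin t → ℝ} {μ : Fin s → ℝ} {v : Fin s → Fin s → ℝ}

theorem kronSum_eq_sum_smul_vecMulVec
    (hΓ : Γ = ∑ i, lam i • vecMulVec (u i) (u i))
    (hu : ∀ i j, u i ⬝ᵥ u j = if i = j then 1 else 0)
    (hΩ : Ω = ∑ j, μ j • vecMulVec (v j) (v j))
    (hv : ∀ i j, v i ⬝ᵥ v j = if i = j then 1 else 0) :
    kronSum Ω Γ = ∑ p : Fin s × Fin t, (μ p.1 + lam p.2) •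
      vecMulVec (kronVec (v p.1) (u p.2)) (kronVec (v p.1) (u p.2)) := by
  rw [kronSum, ← sum_vecMulVec_self_eq_one hu, ← sum_vecMulVec_self_eq_one hv, hΩ, hΓ]
  simp only [sum_kronecker_sum, smul_kronecker, kronecker_smul, ← vecMulVec_kronVec,
    Fintype.sum_prod_type, add_smul, Finset.sum_add_distrib]

theorem hasDerivAt_log_det_kronSum_add_smul_right
    (hΓ : Γ = ∑ i, lam i • vecMulVec (u i) (u i))
    (hu : ∀ i j, u i ⬝ᵥ u j = if i = j then 1 else 0)
    (hΩ : Ω = ∑ j, μ j • vecMulVec (v j) (v j))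
    (hv : ∀ i j, v i ⬝ᵥ v j = if i = j then 1 else 0)
    (hne : ∀ j i, μ j + lam i ≠ 0) (H : Matrix (Fin t) (Fin t) ℝ) :
    HasDerivAt (fun ε : ℝ => Real.log (kronSum Ω (Γ + ε • H)).det)
      (trace ((∑ i, (∑ j, (μ j + lam i)⁻¹) • vecMulVec (u i) (u i))ᵀ * H)) 0 := by
  have h := hasDerivAt_log_det_sum_smul_vecMulVec_add_smul
    (kronVec_dotProduct_kronVec_of_orthonormal hv hu) (fun p => hne p.1 p.2)
    ((1 : Matrix (Fin s) (Fin s) ℝ) ⊗ₖ H)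
  rw [← kronSum_eq_sum_smul_vecMulVec hΓ hu hΩ hv] at h
  simp_rw [kronSum_add_smul_right]
  convert h using 1
  simp only [transpose_sum, transpose_smul, transpose_vecMulVec, trace_sum_smul_vecMulVec_mul,
    kronecker_mulVec_kronVec, kronVec_dotProduct_kronVec, one_mulVec, hv, Fintype.sum_prod_type]
  simp [Finset.sum_mul, Finset.sum_comm (γ := Fin s)]

end KroneckerSum

/-- Gradients (in the Frobenius inner product, expressed via directional
derivatives) of `Γ ↦ log det (Ω ⊕ Γ)` and `Ω ↦ log det (Ω ⊕ Γ)` in terms of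
the eigenpairs `(λᵢ, uᵢ)` of `Γ` and `(μⱼ, vⱼ)` of `Ω`. -/
theorem stmt13 {s t : ℕ}
    (Γ : Matrix (Fin t) (Fin t) ℝ) (Ω : Matrix (Fin s) (Fin s) ℝ)
    (lam : Fin t → ℝ) (u : Fin t → Fin t → ℝ)
    (μ : Fin s → ℝ) (v : Fin s → Fin s → ℝ)
    (hΓ : Γ = ∑ i, lam i • Matrix.vecMulVec (u i) (u i))
    (hu : ∀ i j, u i ⬝ᵥ u j = if i = j then (1 : ℝ) else 0)
    (hΩ : Ω = ∑ j, μ j • Matrix.vecMulVec (v j) (v j))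
    (hv : ∀ i j, v i ⬝ᵥ v j = if i = j then (1 : ℝ) else 0)
    (hpd : (kronSum Ω Γ).PosDef) :
    (∀ H : Matrix (Fin t) (Fin t) ℝ,
      HasDerivAt (fun ε : ℝ => Real.log (kronSum Ω (Γ + ε • H)).det)
        (Matrix.trace
          ((∑ i, (∑ j, (μ j + lam i)⁻¹) • Matrix.vecMulVec (u i) (u i))ᵀ * H)) 0) ∧
    (∀ H : Matrix (Fin s) (Fin s) ℝ,
      HasDerivAt (fun ε : ℝ => Real.log (kronSum (Ω + ε • H) Γ).det)
        (Matrix.trace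
          ((∑ j, (∑ i, (μ j + lam i)⁻¹) • Matrix.vecMulVec (v j) (v j))ᵀ * H)) 0) := by
  rw [kronSum_eq_sum_smul_vecMulVec hΓ hu hΩ hv] at hpd
  have hne : ∀ j i, μ j + lam i ≠ 0 := fun j i =>
    (pos_of_posDef_sum_smul_vecMulVec (kronVec_dotProduct_kronVec_of_orthonormal hv hu) hpd
      (j, i)).ne'
  refine ⟨hasDerivAt_log_det_kronSum_add_smul_right hΓ hu hΩ hv hne, fun H => ?_⟩
  simp_rw [← det_kronSum_comm _ Γ, add_comm (μ _)]
  exact hasDerivAt_log_det_kronSum_add_smul_right hΩ hv hΓ hu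
    (fun i j => by simpa [add_comm] using hne j i) H
end

section
/- Let the feasible set F₂ = {(Γ,Ω) : Γ ∈ S^t_{++}, Ω ∈ S^s_{++}} and F₃ = {(Γ,Ω) : Ω ⊕ Γ ∈ S^{ts}_{++}, diag(Γ) ≥ 0, diag(Ω) ≥ 0}. Then F₂ ⊆ F₃, and for any objective f(Γ,Ω) that depends on (Γ,Ω) only through the Kronecker sum Ω ⊕ Γ, the infimum of f over F₂ equals the infimum of f over F₃. -/
/-!
The eigenvalues of `Ω ⊕ Γ` are the sums `λᵢ(Ω) + μⱼ(Γ)`, so `Ω ⊕ Γ ≻ 0` says exactly that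
`-λᵢ(Ω) < μⱼ(Γ)` for all `i, j`. Any `c` separating these two finite sets of reals makes both
`Ω + cI` and `Γ - cI` positive definite, and this shift does not change `Ω ⊕ Γ`. Hence every value
of an objective that only sees `Ω ⊕ Γ` on `F₃` is already attained on `F₂`.
-/

open Matrix
open scoped Kronecker ComplexOrder

namespace Matrix

variable {m n 𝕜 : Type*} [Fintype m] [Fintype n] [DecidableEq m] [DecidableEq n] [RCLike 𝕜]

lemma IsHermitian.posDef_add_smul_one_iff {A : Matrix n n 𝕜} (hA : A.IsHermitian) (c : ℝ) :
    (A + c • 1).PosDef ↔ ∀ i, 0 < hA.eigenvalues i + c := by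
  set U : Matrix n n 𝕜 := ↑hA.eigenvectorUnitary
  have hdiag : A + c • 1 = U * diagonal (fun i => ((hA.eigenvalues i + c : ℝ) : 𝕜)) * star U := by
    conv_lhs => rw [hA.spectral_theorem, Unitary.conjStarAlgAut_apply]
    simp only [RCLike.ofReal_add, ← diagonal_add, Function.comp_def, ← smul_one_eq_diagonal]
    rw [mul_add, add_mul, mul_smul_comm, mul_one, smul_mul_assoc,
      Unitary.mul_star_self_of_mem hA.eigenvectorUnitary.2, RCLike.real_smul_eq_coe_smul (K := 𝕜)]
  rw [hdiag, Unitary.isUnit_coe.posDef_star_right_conjugate_iff, posDef_diagonal_iff]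
  simp only [RCLike.ofReal_pos]

lemma posDef_kronecker_one_add_one_kronecker_iff {A : Matrix m m 𝕜} {B : Matrix n n 𝕜}
    (hA : A.IsHermitian) (hB : B.IsHermitian) :
    (A ⊗ₖ 1 + 1 ⊗ₖ B).PosDef ↔ ∀ i j, 0 < hA.eigenvalues i + hB.eigenvalues j := by
  set U : Matrix m m 𝕜 := ↑hA.eigenvectorUnitary
  set V : Matrix n n 𝕜 := ↑hB.eigenvectorUnitary
  have hconj (X : Matrix m m 𝕜) (Y : Matrix n n 𝕜) :
      (U ⊗ₖ V) * (X ⊗ₖ Y) * star (U ⊗ₖ V) = (U * X * star U) ⊗ₖ (V * Y * star V) := by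
    simp only [star_eq_conjTranspose, conjTranspose_kronecker, mul_kronecker_mul]
  have hU : U * 1 * star U = 1 := by
    rw [mul_one, Unitary.mul_star_self_of_mem hA.eigenvectorUnitary.2]
  have hV : V * 1 * star V = 1 := by
    rw [mul_one, Unitary.mul_star_self_of_mem hB.eigenvectorUnitary.2]
  have hsum : diagonal (fun p : m × n => ((hA.eigenvalues p.1 + hB.eigenvalues p.2 : ℝ) : 𝕜)) =
      diagonal (RCLike.ofReal ∘ hA.eigenvalues) ⊗ₖ 1 +
        1 ⊗ₖ diagonal (RCLike.ofReal ∘ hB.eigenvalues) := by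
    simp only [← diagonal_one, diagonal_kronecker_diagonal, diagonal_add]
    simp
  have hdiag : A ⊗ₖ 1 + 1 ⊗ₖ B = (U ⊗ₖ V) *
      diagonal (fun p => ((hA.eigenvalues p.1 + hB.eigenvalues p.2 : ℝ) : 𝕜)) * star (U ⊗ₖ V) := by
    rw [hsum, mul_add, add_mul, hconj, hconj, hU, hV]
    conv_lhs => rw [hA.spectral_theorem, hB.spectral_theorem]
    rfl
  have hW : U ⊗ₖ V ∈ unitary (Matrix (m × n) (m × n) 𝕜) :=
    kronecker_mem_unitary hA.eigenvectorUnitary.2 hB.eigenvectorUnitary.2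
  rw [hdiag, (Unitary.isUnit_coe (U := ⟨_, hW⟩)).posDef_star_right_conjugate_iff,
    posDef_diagonal_iff]
  simp only [RCLike.ofReal_pos, Prod.forall]

end Matrix

section kronSum

variable {s t : ℕ}

lemma posDef_kronSum {Ω : Matrix (Fin s) (Fin s) ℝ} {Γ : Matrix (Fin t) (Fin t) ℝ}
    (hΩ : Ω.PosDef) (hΓ : Γ.PosDef) : (kronSum Ω Γ).PosDef :=
  (hΩ.kronecker PosDef.one).add (PosDef.one.kronecker hΓ)

lemma kronSum_add_smul_one_sub_smul_one (Ω : Matrix (Fin s) (Fin s) ℝ)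
    (Γ : Matrix (Fin t) (Fin t) ℝ) (c : ℝ) :
    kronSum (Ω + c • 1) (Γ - c • 1) = kronSum Ω Γ := by
  have hsub : (1 : Matrix (Fin s) (Fin s) ℝ) ⊗ₖ (Γ - c • 1) = 1 ⊗ₖ Γ - c • (1 ⊗ₖ 1) := by
    rw [sub_eq_add_neg, kronecker_add, ← neg_smul, kronecker_smul, neg_smul, sub_eq_add_neg]
  rw [kronSum, kronSum, add_kronecker, hsub, smul_kronecker]
  abel

lemma exists_posDef_shift_of_posDef_kronSum {Ω : Matrix (Fin s) (Fin s) ℝ}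
    {Γ : Matrix (Fin t) (Fin t) ℝ} (hΩ : Ω.IsHermitian) (hΓ : Γ.IsHermitian)
    (h : (kronSum Ω Γ).PosDef) : ∃ c : ℝ, (Ω + c • 1).PosDef ∧ (Γ - c • 1).PosDef := by
  have hsep : ∀ x ∈ Set.range (-hΩ.eigenvalues), ∀ y ∈ Set.range hΓ.eigenvalues, x < y := by
    rintro _ ⟨i, rfl⟩ _ ⟨j, rfl⟩
    simpa [neg_lt_iff_pos_add'] using (posDef_kronecker_one_add_one_kronecker_iff hΩ hΓ).mp h i j
  obtain ⟨c, hΩc, hΓc⟩ := (Set.finite_range _).exists_between' (Set.finite_range _) hsep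
  refine ⟨c, (hΩ.posDef_add_smul_one_iff c).mpr fun i => ?_, ?_⟩
  · simpa [neg_lt_iff_pos_add'] using hΩc _ ⟨i, rfl⟩
  · rw [sub_eq_add_neg, ← neg_smul, hΓ.posDef_add_smul_one_iff]
    exact fun j => by simpa [← sub_eq_add_neg] using hΓc _ ⟨j, rfl⟩

end kronSum

/-- `F₂ = {(Γ,Ω) : Γ ≻ 0, Ω ≻ 0} ⊆ F₃ = {(Γ,Ω) symmetric : Ω ⊕ Γ ≻ 0,
diag(Γ) ≥ 0, diag(Ω) ≥ 0}`, and any objective depending on `(Γ,Ω)` only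
through `Ω ⊕ Γ` has the same infimum over `F₂` and `F₃`. -/
theorem stmt17 {s t : ℕ} :
    let F2 : Set (Matrix (Fin t) (Fin t) ℝ × Matrix (Fin s) (Fin s) ℝ) :=
      {p | p.1.PosDef ∧ p.2.PosDef}
    let F3 : Set (Matrix (Fin t) (Fin t) ℝ × Matrix (Fin s) (Fin s) ℝ) :=
      {p | p.1.IsHermitian ∧ p.2.IsHermitian ∧ (kronSum p.2 p.1).PosDef ∧
        (∀ i, 0 ≤ p.1 i i) ∧ (∀ j, 0 ≤ p.2 j j)}
    F2 ⊆ F3 ∧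
      ∀ f : Matrix (Fin t) (Fin t) ℝ × Matrix (Fin s) (Fin s) ℝ → ℝ,
        (∀ p q, kronSum p.2 p.1 = kronSum q.2 q.1 → f p = f q) →
        sInf (f '' F2) = sInf (f '' F3) := by
  intro F2 F3
  have hsub : F2 ⊆ F3 := by
    rintro ⟨Γ, Ω⟩ ⟨hΓ, hΩ⟩
    exact ⟨hΓ.1, hΩ.1, posDef_kronSum hΩ hΓ, fun _ => hΓ.diag_pos.le, fun _ => hΩ.diag_pos.le⟩
  refine ⟨hsub, fun f hf => congrArg sInf ((Set.image_mono hsub).antisymm ?_)⟩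
  rintro _ ⟨⟨Γ, Ω⟩, ⟨hΓ, hΩ, hK, -, -⟩, rfl⟩
  obtain ⟨c, hΩc, hΓc⟩ := exists_posDef_shift_of_posDef_kronSum hΩ hΓ hK
  exact ⟨(Γ - c • 1, Ω + c • 1), ⟨hΓc, hΩc⟩, hf _ _ (kronSum_add_smul_one_sub_smul_one Ω Γ c)⟩
end
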